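/- arXiv:1102.4802 — 2 statements merged into one kernel-verified Lean document; each statement's English description precedes it below -/
import Mathlib

section
/- Let (G, C, color) be an edge-colored graph of order at least m, and let f be a function from the color set C to the non-negative integers. If G has an f-chromatic spanning forest with exactly m components, then for every subset R of C, the number of components of G - E_R(G) is at most m + sum over c in R of f(c). -/
open SimpleGraph Finset

/-- Number of connected components of a graph. -/
noncomputable def omega {V : Type*} (G : SimpleGraph V) : ℕ :=
  Nat.card G.ConnectedComponent

/-- Number of edges of `G` having color `c`. -/
noncomputable def colorCount {V C : Type*} (G : SimpleGraph V)
    (color : Sym2 V → C) (c : C) : ℕ :=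
  Nat.card {e : Sym2 V // e ∈ G.edgeSet ∧ color e = c}

/-- `G` is `f`-chromatic: each color `c` appears on at most `f c` edges. -/
def IsChromatic {V C : Type*} (G : SimpleGraph V)
    (color : Sym2 V → C) (f : C → ℕ) : Prop :=
  ∀ c, colorCount G color c ≤ f c

/-- `G - E_R(G)` : delete all edges whose color lies in `R`. -/
def delR {V C : Type*} (G : SimpleGraph V) (color : Sym2 V → C)
    (R : Finset C) : SimpleGraph V :=
  G.deleteEdges {e | color e ∈ R}

/-!
Deleting an edge raises the number of components by at most one, and deleting edges never
lowers it. Hence `ω(G - E_R(G)) ≤ ω(F - E_R(F)) ≤ ω(F) + |E_R(F)| ≤ m + ∑_{c ∈ R} f(c)`.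
-/

namespace SimpleGraph

variable {V : Type*}

theorem Reachable.deleteEdges_singleton_or {G : SimpleGraph V} {u v x y : V}
    (h : G.Reachable x y) :
    (G.deleteEdges {s(u, v)}).Reachable x y ∨ (G.deleteEdges {s(u, v)}).Reachable x u ∨
      (G.deleteEdges {s(u, v)}).Reachable x v := by
  obtain ⟨p⟩ := h
  induction p with
  | nil => exact Or.inl .rfl
  | @cons a b _ hab _ ih =>
    by_cases he : s(a, b) = s(u, v)
    · rcases Sym2.eq_iff.mp he with ⟨rfl, -⟩ | ⟨rfl, -⟩
      · exact Or.inr (Or.inl .rfl)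
      · exact Or.inr (Or.inr .rfl)
    · have hab' : (G.deleteEdges {s(u, v)}).Reachable a b :=
        (deleteEdges_adj.mpr ⟨hab, he⟩).reachable
      exact ih.imp hab'.trans (Or.imp hab'.trans hab'.trans)

theorem omega_anti [Finite V] {G H : SimpleGraph V} (h : G ≤ H) : omega H ≤ omega G :=
  ConnectedComponent.card_le_card_of_le h

/-- Components of `G - uv` other than that of `v` are told apart by their components in `G`. -/
theorem omega_deleteEdges_singleton_le [Finite V] (G : SimpleGraph V) (e : Sym2 V) :
    omega (G.deleteEdges {e}) ≤ omega G + 1 := by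
  classical
  induction e using Sym2.ind with | _ u v =>
  set G' := G.deleteEdges {s(u, v)}
  let φ (c : G'.ConnectedComponent) : Option G.ConnectedComponent :=
    if c = G'.connectedComponentMk v then none
    else some (c.map (Hom.ofLE (G.deleteEdges_le _)))
  have hφ : φ.Injective := by
    intro c₁ c₂ h
    induction c₁ using ConnectedComponent.ind with | _ x =>
    induction c₂ using ConnectedComponent.ind with | _ y =>
    simp only [φ, ConnectedComponent.eq] at h ⊢
    split_ifs at h with hx hy hy
    · exact hx.trans hy.symm
    · have hxy : G.Reachable x y := ConnectedComponent.eq.mp (Option.some_injective _ h)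
      rcases hxy.deleteEdges_singleton_or (u := u) (v := v) with hxy | hxu | hxv
      · exact hxy
      · rcases hxy.symm.deleteEdges_singleton_or (u := u) (v := v) with hyx | hyu | hyv
        · exact hyx.symm
        · exact hxu.trans hyu.symm
        · exact absurd hyv hy
      · exact absurd hxv hx
  calc omega G' ≤ Nat.card (Option G.ConnectedComponent) := Nat.card_le_card_of_injective φ hφ
    _ = omega G + 1 := Finite.card_option

theorem omega_deleteEdges_le [Finite V] (G : SimpleGraph V) (s : Finset (Sym2 V)) :
    omega (G.deleteEdges s) ≤ omega G + #s := by
  classical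
  induction s using Finset.induction generalizing G with
  | empty => simp
  | @insert e s he ih =>
    rw [coe_insert, Set.insert_eq, ← deleteEdges_deleteEdges, card_insert_of_notMem he]
    grw [ih, omega_deleteEdges_singleton_le]
    omega

variable {C : Type*}

theorem colorCount_eq_card_filter (G : SimpleGraph V) [Fintype G.edgeSet] [DecidableEq C]
    (color : Sym2 V → C) (c : C) :
    colorCount G color c = #{e ∈ G.edgeFinset | color e = c} := by
  rw [colorCount, ← Nat.card_eq_finsetCard]
  exact Nat.card_congr (.subtypeEquivRight fun e ↦ by simp)

theorem card_filter_color_mem_eq_sum_colorCount (G : SimpleGraph V) [Fintype G.edgeSet]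
    [DecidableEq C] (color : Sym2 V → C) (R : Finset C) :
    #{e ∈ G.edgeFinset | color e ∈ R} = ∑ c ∈ R, colorCount G color c := by
  rw [card_eq_sum_card_fiberwise (t := R) fun e he ↦ by exact (mem_filter.mp he).2]
  refine sum_congr rfl fun c hc ↦ ?_
  rw [colorCount_eq_card_filter, filter_filter]
  congr 1
  ext e
  simp only [mem_filter, and_congr_right_iff, and_iff_right_iff_imp]
  rintro - rfl
  exact hc

theorem delR_mono {G H : SimpleGraph V} (h : G ≤ H) (color : Sym2 V → C) (R : Finset C) :
    delR G color R ≤ delR H color R :=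
  deleteEdges_mono h

theorem delR_eq_deleteEdges (G : SimpleGraph V) [Fintype G.edgeSet] [DecidableEq C]
    (color : Sym2 V → C) (R : Finset C) :
    delR G color R = G.deleteEdges ↑{e ∈ G.edgeFinset | color e ∈ R} := by
  rw [delR, deleteEdges_eq_inter_edgeSet]
  congr 1
  ext e
  simp [and_comm]

theorem omega_delR_le [Finite V] (G : SimpleGraph V) (color : Sym2 V → C) (R : Finset C) :
    omega (delR G color R) ≤ omega G + ∑ c ∈ R, colorCount G color c := by
  classical
  have := Fintype.ofFinite V
  rw [delR_eq_deleteEdges, ← card_filter_color_mem_eq_sum_colorCount]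
  exact omega_deleteEdges_le G _

end SimpleGraph

theorem stmt2_general {V C : Type*} [Fintype V] (G : SimpleGraph V) (color : Sym2 V → C)
    (f : C → ℕ) (m : ℕ)
    (F : SimpleGraph V) (hFG : F ≤ G) (hFm : omega F = m)
    (hFc : IsChromatic F color f) :
    ∀ R : Finset C, omega (delR G color R) ≤ m + ∑ c ∈ R, f c := by
  intro R
  calc omega (delR G color R) ≤ omega (delR F color R) := omega_anti (delR_mono hFG color R)
    _ ≤ omega F + ∑ c ∈ R, colorCount F color c := omega_delR_le F color R
    _ ≤ m + ∑ c ∈ R, f c := by rw [hFm]; gcongr with c; exact hFc c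

theorem stmt2 {V C : Type*} [Fintype V] (G : SimpleGraph V) (color : Sym2 V → C)
    (f : C → ℕ) (m : ℕ) (hm : m ≤ Fintype.card V)
    (F : SimpleGraph V) (hFG : F ≤ G) (hFa : F.IsAcyclic) (hFm : omega F = m)
    (hFc : IsChromatic F color f) :
    ∀ R : Finset C, omega (delR G color R) ≤ m + ∑ c ∈ R, f c :=
  stmt2_general G color f m F hFG hFm hFc
end

section
/- An edge-colored complete graph K_n (n >= 2) has a heterochromatic spanning tree if every color appears on at most n/2 edges. -/
open SimpleGraph Finset

/-!
Rainbow forests are the common independent sets of the graphic matroid of `K_n` and of the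
partition matroid of the colour classes, and the proof is the augmenting-path argument of matroid
intersection. Call a colour reachable from a rainbow forest `E` if it is the colour of an edge
joining two components of `E`, or of an edge `xy` that can replace in `E` an edge of reachable
colour lying on the path from `x` to `y`. If some reachable colour is unused by `E`, performing
the corresponding exchanges, starting from the edge that joins two components, yields a rainbow
forest with one more edge. Otherwise let `D` be the set of edges of `E` with a reachable colour:
two vertices in different components of `E \ D` span an edge whose colour occurs in `D`. As
`E \ D` has `n - |E| + |D|` components, at least `n (n - |E| + |D| - 1)` ordered pairs of
vertices are separated, while the colours of `D` colour at most `|D| n` ordered pairs, each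
colour class having at most `n / 2` edges. Hence `|E| ≥ n - 1` as soon as `E` cannot be enlarged.
-/

namespace SimpleGraph

variable {V : Type*} {G H : SimpleGraph V} {u v x y : V}

theorem Reachable.sup_edge_cases (h : (G ⊔ edge u v).Reachable x y) :
    G.Reachable x y ∨ G.Reachable x u ∧ G.Reachable v y ∨
      G.Reachable x v ∧ G.Reachable u y := by
  obtain ⟨w⟩ := h
  induction w with
  | nil => exact .inl .rfl
  | @cons a b c hab _ ih =>
    rw [sup_adj, edge_adj] at hab
    rcases hab with hab | ⟨⟨rfl, rfl⟩ | ⟨rfl, rfl⟩, -⟩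
    · have := hab.reachable
      rcases ih with h | ⟨h₁, h₂⟩ | ⟨h₁, h₂⟩
      · exact .inl (this.trans h)
      · exact .inr (.inl ⟨this.trans h₁, h₂⟩)
      · exact .inr (.inr ⟨this.trans h₁, h₂⟩)
    · rcases ih with h | ⟨h₁, h₂⟩ | ⟨h₁, h₂⟩
      · exact .inr (.inl ⟨.rfl, h⟩)
      · exact .inl (h₁.symm.trans h₂)
      · exact .inl h₂
    · rcases ih with h | ⟨h₁, h₂⟩ | ⟨h₁, h₂⟩
      · exact .inr (.inr ⟨.rfl, h⟩)
      · exact .inl h₂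
      · exact .inl (h₁.symm.trans h₂)

theorem not_reachable_sup_edge (hHG : H ≤ G) (huv : ¬G.Reachable u v) (hxy : G.Reachable x y)
    (h : ¬H.Reachable x y) : ¬(H ⊔ edge u v).Reachable x y := by
  intro h'
  rcases h'.sup_edge_cases with h' | ⟨h₁, h₂⟩ | ⟨h₁, h₂⟩
  · exact h h'
  · exact huv ((h₁.mono hHG).symm.trans (hxy.trans (h₂.mono hHG).symm))
  · exact huv ((h₂.mono hHG).trans (hxy.symm.trans (h₁.mono hHG)))

theorem card_connectedComponent_sup_edge [Finite V] (h : ¬G.Reachable u v) :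
    Nat.card (G ⊔ edge u v).ConnectedComponent + 1 = Nat.card G.ConnectedComponent := by
  classical
  let φ : {c : G.ConnectedComponent // c ≠ G.connectedComponentMk v} →
      (G ⊔ edge u v).ConnectedComponent := fun c => c.1.map (.ofLE le_sup_left)
  have hφ : φ.Bijective := by
    constructor
    · rintro ⟨c, hc⟩ ⟨d, hd⟩ hcd
      induction c using ConnectedComponent.ind
      induction d using ConnectedComponent.ind
      simp only [φ, ConnectedComponent.map_mk, ConnectedComponent.eq] at hcd hc hd
      rcases hcd.sup_edge_cases with h' | ⟨-, h'⟩ | ⟨h', -⟩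
      · exact Subtype.ext (ConnectedComponent.eq.mpr h')
      · exact absurd (ConnectedComponent.eq.mpr h'.symm) hd
      · exact absurd (ConnectedComponent.eq.mpr h') hc
    · intro c
      induction c using ConnectedComponent.ind with | h a => ?_
      by_cases hav : G.Reachable a v
      · refine ⟨⟨G.connectedComponentMk u, h ∘ ConnectedComponent.eq.mp⟩, ?_⟩
        have huv : u ≠ v := by rintro rfl; exact h .rfl
        simp only [φ, ConnectedComponent.map_mk, ConnectedComponent.eq]
        exact (Adj.reachable (by simp [edge_adj, huv])).trans (hav.mono le_sup_left).symm
      · exact ⟨⟨G.connectedComponentMk a, hav ∘ ConnectedComponent.eq.mp⟩, rfl⟩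
  have := Fintype.ofFinite G.ConnectedComponent
  rw [← Nat.card_eq_of_bijective φ hφ, Nat.card_eq_fintype_card, Nat.card_eq_fintype_card,
    Fintype.card_subtype_compl, Fintype.card_subtype_eq]
  have : 0 < Fintype.card G.ConnectedComponent :=
    Fintype.card_pos_iff.mpr ⟨G.connectedComponentMk v⟩
  omega

theorem IsAcyclic.exists_not_reachable_deleteEdges_singleton (hG : G.IsAcyclic)
    {s : Set (Sym2 V)} (hxy : G.Reachable x y) (h : ¬(G.deleteEdges s).Reachable x y) :
    ∃ e ∈ s, ¬(G.deleteEdges {e}).Reachable x y := by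
  classical
  obtain ⟨p, hp⟩ := hxy.exists_isPath
  obtain ⟨e, hep, hes⟩ : ∃ e ∈ p.edges, e ∈ s := by
    by_contra! hs
    exact h ⟨p.toDeleteEdges s hs⟩
  refine ⟨e, hes, ?_⟩
  induction e using Sym2.ind with | _ a b => ?_
  rw [reachable_deleteEdges_iff_exists_walk]
  rintro ⟨q, hq⟩
  have hpq : p = q.bypass :=
    congrArg Subtype.val ((hG.subsingleton_path x y).elim ⟨p, hp⟩ q.toPath)
  exact hq (q.edges_bypass_subset_edges (hpq ▸ hep))

theorem card_connectedComponent_bot [Finite V] :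
    Nat.card (⊥ : SimpleGraph V).ConnectedComponent = Nat.card V :=
  (Nat.card_eq_of_bijective _ ⟨fun _ _ h => reachable_bot.mp (ConnectedComponent.eq.mp h),
    fun c => c.exists_rep⟩).symm

end SimpleGraph

namespace HeterochromaticTree

section EdgeFinset

variable {V : Type*}

def edgeGraph (E : Finset (Sym2 V)) : SimpleGraph V := fromEdgeSet ↑E

variable {E F D : Finset (Sym2 V)} {x y : V}

theorem edgeGraph_adj : (edgeGraph E).Adj x y ↔ s(x, y) ∈ E ∧ x ≠ y := fromEdgeSet_adj _

theorem edgeGraph_mono (h : E ⊆ F) : edgeGraph E ≤ edgeGraph F :=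
  fromEdgeSet_mono (coe_subset.mpr h)

theorem reachable_edgeGraph_of_mem (h : s(x, y) ∈ E) : (edgeGraph E).Reachable x y := by
  by_cases hxy : x = y
  · exact hxy ▸ .rfl
  · exact (edgeGraph_adj.mpr ⟨h, hxy⟩).reachable

variable [DecidableEq V]

theorem edgeGraph_insert_mk : edgeGraph (insert s(x, y) E) = edgeGraph E ⊔ edge x y := by
  ext a b
  simp only [edgeGraph, coe_insert, fromEdgeSet_adj, Set.mem_insert_iff, mem_coe, sup_adj,
    edge_adj, Sym2.eq_iff]
  tauto

theorem edgeGraph_sdiff : edgeGraph (E \ D) = (edgeGraph E).deleteEdges ↑D := by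
  simp [edgeGraph, deleteEdges]

theorem edgeGraph_erase {f : Sym2 V} : edgeGraph (E.erase f) = (edgeGraph E).deleteEdges {f} := by
  simp [edgeGraph, deleteEdges]

theorem card_connectedComponent_add_card [Fintype V] (hloop : ∀ e ∈ E, ¬e.IsDiag)
    (hE : (edgeGraph E).IsAcyclic) :
    Nat.card (edgeGraph E).ConnectedComponent + #E = Fintype.card V := by
  induction E using Finset.induction_on with
  | empty =>
    rw [card_empty, add_zero, edgeGraph, coe_empty, fromEdgeSet_empty,
      card_connectedComponent_bot, Nat.card_eq_fintype_card]
  | @insert e E he ih =>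
    induction e using Sym2.ind with | _ x y => ?_
    have hxy : x ≠ y := by simpa using hloop _ (mem_insert_self _ _)
    rw [edgeGraph_insert_mk, isAcyclic_sup_fromEdgeSet_iff] at hE
    have hnr : ¬(edgeGraph E).Reachable x y := fun h => by
      rcases hE.2 h with h | h
      · exact hxy h
      · exact he (edgeGraph_adj.mp h).1
    rw [edgeGraph_insert_mk, card_insert_of_notMem he,
      ← ih (fun e he => hloop e (mem_insert_of_mem he)) hE.1,
      ← card_connectedComponent_sup_edge hnr]
    ring

theorem exists_not_reachable_erase (hE : (edgeGraph E).IsAcyclic)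
    (hxy : (edgeGraph E).Reachable x y) (h : ¬(edgeGraph (E \ D)).Reachable x y) :
    ∃ f ∈ D, ¬(edgeGraph (E.erase f)).Reachable x y := by
  simp only [edgeGraph_sdiff, edgeGraph_erase] at h ⊢
  exact hE.exists_not_reachable_deleteEdges_singleton hxy h

end EdgeFinset

section Exchange

variable {V C : Type*} (color : Sym2 V → C)

structure IsRainbowForest (E : Finset (Sym2 V)) : Prop where
  loopless : ∀ e ∈ E, ¬e.IsDiag
  isAcyclic : (edgeGraph E).IsAcyclic
  injOn : Set.InjOn color ↑E

variable {color} {E S : Finset (Sym2 V)} {f f₀ : Sym2 V} {x y x₀ y₀ : V}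

theorem IsRainbowForest.empty : IsRainbowForest color (∅ : Finset (Sym2 V)) where
  loopless := by simp
  isAcyclic := by simp only [edgeGraph, coe_empty, fromEdgeSet_empty]; exact isAcyclic_bot
  injOn := by simp

variable [DecidableEq V]

def CanReplace (E : Finset (Sym2 V)) (f : Sym2 V) (x y : V) : Prop :=
  (edgeGraph E).Reachable x y ∧ ¬(edgeGraph (E.erase f)).Reachable x y

theorem CanReplace.mem (h : CanReplace E f x y) : f ∈ E := by
  by_contra hf
  exact h.2 (by rw [erase_eq_of_notMem hf]; exact h.1)

theorem IsRainbowForest.erase (hE : IsRainbowForest color E) (f : Sym2 V) :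
    IsRainbowForest color (E.erase f) where
  loopless e he := hE.loopless e (mem_of_mem_erase he)
  isAcyclic := hE.isAcyclic.anti (edgeGraph_mono (erase_subset f E))
  injOn := hE.injOn.mono (coe_subset.mpr (erase_subset f E))

theorem IsRainbowForest.insert_of_not_reachable (hE : IsRainbowForest color E)
    (hxy : ¬(edgeGraph E).Reachable x y) (hc : color s(x, y) ∉ color '' ↑E) :
    IsRainbowForest color (insert s(x, y) E) where
  loopless e he := by
    rcases mem_insert.mp he with rfl | he
    · exact fun hd => hxy (Sym2.mk_isDiag_iff.mp hd ▸ .rfl)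
    · exact hE.loopless e he
  isAcyclic := by
    rw [edgeGraph_insert_mk]
    exact hE.isAcyclic.sup_edge_of_not_reachable hxy
  injOn := by
    rw [coe_insert, Set.injOn_insert (fun h => hxy (reachable_edgeGraph_of_mem h))]
    exact ⟨hE.injOn, hc⟩

theorem IsRainbowForest.exchange (hE : IsRainbowForest color E)
    (hxy : ¬(edgeGraph E).Reachable x y) (hf : f ∈ E) (hc : color f = color s(x, y)) :
    IsRainbowForest color (insert s(x, y) (E.erase f)) := by
  refine (hE.erase f).insert_of_not_reachable
    (fun h => hxy (h.mono (edgeGraph_mono (erase_subset f E)))) ?_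
  rintro ⟨g, hg, hgc⟩
  rw [coe_erase] at hg
  exact hg.2 (hE.injOn hg.1 hf (hgc.trans hc.symm))

theorem not_reachable_insert (hS : S ⊆ E) (hxy₀ : ¬(edgeGraph E).Reachable x₀ y₀)
    (hxy : (edgeGraph E).Reachable x y) (h : ¬(edgeGraph S).Reachable x y) :
    ¬(edgeGraph (insert s(x₀, y₀) S)).Reachable x y := by
  rw [edgeGraph_insert_mk]
  exact not_reachable_sup_edge (edgeGraph_mono hS) hxy₀ hxy h

theorem CanReplace.exists_after_exchange (hxy₀ : ¬(edgeGraph E).Reachable x₀ y₀)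
    (hc : color f₀ = color s(x₀, y₀)) (h : CanReplace E f x y) :
    ∃ f', color f' = color f ∧
      ¬(edgeGraph ((insert s(x₀, y₀) (E.erase f₀)).erase f')).Reachable x y := by
  have hnew : s(x₀, y₀) ∉ E := fun h => hxy₀ (reachable_edgeGraph_of_mem h)
  by_cases hf : f = f₀
  · subst hf
    refine ⟨s(x₀, y₀), hc.symm, ?_⟩
    rw [erase_insert (fun h => hnew (mem_of_mem_erase h))]
    exact h.2
  · refine ⟨f, rfl, ?_⟩
    rw [erase_insert_of_ne (fun h' => hnew (by rw [h']; exact h.mem))]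
    refine not_reachable_insert ((erase_subset _ _).trans (erase_subset _ _)) hxy₀ h.1
      fun h' => h.2 (h'.mono (edgeGraph_mono ?_))
    rw [erase_right_comm]
    exact erase_subset _ _

variable (color) in
/-- The bound `k` on the number of exchanges is the induction measure of
`LeadsToFreshColor.exists_card_eq_succ`, along which the forest changes. -/
inductive LeadsToFreshColor (E : Finset (Sym2 V)) : ℕ → C → Prop
  | fresh {k : ℕ} {c : C} : c ∉ color '' ↑E → LeadsToFreshColor E k c
  | replace {k : ℕ} {f : Sym2 V} {x y : V} : CanReplace E f x y →
      LeadsToFreshColor E k (color s(x, y)) → LeadsToFreshColor E (k + 1) (color f)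

variable (color) in
inductive IsReachableColor (E : Finset (Sym2 V)) : C → Prop
  | cross {x y : V} : ¬(edgeGraph E).Reachable x y → IsReachableColor E (color s(x, y))
  | replace {f : Sym2 V} {x y : V} : IsReachableColor E (color f) → CanReplace E f x y →
      IsReachableColor E (color s(x, y))

theorem LeadsToFreshColor.succ {k : ℕ} {c : C} (h : LeadsToFreshColor color E k c) :
    LeadsToFreshColor color E (k + 1) c := by
  induction h with
  | fresh hc => exact .fresh hc
  | replace hr _ ih => exact .replace hr ih

/-- A path created by the new edge `s(x₀, y₀)` would join `x₀` and `y₀` in `E`, so the later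
exchanges of a chain remain valid after its first one, unless their edge now joins two
components, in which case a new chain starts there. -/
theorem LeadsToFreshColor.exchange {k : ℕ} {c : C} (hxy₀ : ¬(edgeGraph E).Reachable x₀ y₀)
    (hf₀ : f₀ ∈ E) (hc : color f₀ = color s(x₀, y₀))
    (h : LeadsToFreshColor color E k c) :
    LeadsToFreshColor color (insert s(x₀, y₀) (E.erase f₀)) k c ∨
      ∃ x y, ¬(edgeGraph (insert s(x₀, y₀) (E.erase f₀))).Reachable x y ∧
        LeadsToFreshColor color (insert s(x₀, y₀) (E.erase f₀)) k (color s(x, y)) := by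
  induction h with
  | fresh hfresh =>
    refine .inl (.fresh fun ⟨g, hg, hgc⟩ => hfresh ?_)
    rcases mem_insert.mp hg with rfl | hg
    · exact ⟨f₀, hf₀, hc.trans hgc⟩
    · exact ⟨g, mem_of_mem_erase hg, hgc⟩
  | @replace k f x y hr _ ih =>
    obtain ⟨f', hf', hnr⟩ := hr.exists_after_exchange hxy₀ hc
    rcases ih with ih | ⟨x', y', hx'y', ih⟩
    · by_cases hR : (edgeGraph (insert s(x₀, y₀) (E.erase f₀))).Reachable x y
      · exact .inl (hf' ▸ .replace ⟨hR, hnr⟩ ih)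
      · exact .inr ⟨x, y, hR, ih.succ⟩
    · exact .inr ⟨x', y', hx'y', ih.succ⟩

theorem IsRainbowForest.exists_card_eq_succ_of_not_reachable (hE : IsRainbowForest color E)
    (hxy : ¬(edgeGraph E).Reachable x y) (hc : color s(x, y) ∉ color '' ↑E) :
    ∃ F, IsRainbowForest color F ∧ #F = #E + 1 :=
  ⟨_, hE.insert_of_not_reachable hxy hc,
    card_insert_of_notMem fun h => hxy (reachable_edgeGraph_of_mem h)⟩

theorem LeadsToFreshColor.exists_card_eq_succ {k : ℕ} (hE : IsRainbowForest color E)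
    (hxy : ¬(edgeGraph E).Reachable x y) (h : LeadsToFreshColor color E k (color s(x, y))) :
    ∃ F, IsRainbowForest color F ∧ #F = #E + 1 := by
  generalize hc : color s(x, y) = c at h
  induction k generalizing E x y c with
  | zero =>
    cases h with
    | fresh hfresh => exact hE.exists_card_eq_succ_of_not_reachable hxy (hc ▸ hfresh)
  | succ k ih =>
    cases h with
    | fresh hfresh => exact hE.exists_card_eq_succ_of_not_reachable hxy (hc ▸ hfresh)
    | @replace _ f x₁ y₁ hr htail =>
      have hE' := hE.exchange hxy hr.mem hc.symm
      have hcard : #(insert s(x, y) (E.erase f)) = #E := by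
        rw [card_insert_of_notMem
          fun h => hxy (reachable_edgeGraph_of_mem (mem_of_mem_erase h)), card_erase_add_one hr.mem]
      have hcross := not_reachable_insert (erase_subset _ _) hxy hr.1 hr.2
      rw [← hcard]
      rcases htail.exchange hxy hr.mem hc.symm with htail | ⟨x', y', hx'y', htail⟩
      · exact ih hE' hcross _ rfl htail
      · exact ih hE' hx'y' _ rfl htail

theorem IsReachableColor.exists_leadsToFreshColor {k : ℕ} {c : C}
    (h : IsReachableColor color E c) (hk : LeadsToFreshColor color E k c) :
    ∃ x y k', ¬(edgeGraph E).Reachable x y ∧ LeadsToFreshColor color E k' (color s(x, y)) := by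
  induction h generalizing k with
  | cross hxy => exact ⟨_, _, k, hxy, hk⟩
  | replace _ hr ih => exact ih (.replace hr hk)

theorem IsRainbowForest.exists_card_eq_succ_of_isReachableColor {c : C}
    (hE : IsRainbowForest color E) (h : IsReachableColor color E c) (hc : c ∉ color '' ↑E) :
    ∃ F, IsRainbowForest color F ∧ #F = #E + 1 := by
  obtain ⟨x, y, k, hxy, hk⟩ := h.exists_leadsToFreshColor (.fresh (k := 0) hc)
  exact hk.exists_card_eq_succ hE hxy

end Exchange

section Counting

variable {V C : Type*} [Fintype V]

theorem mul_card_sub_one_le_card_filter_ne {β : Type*} [Fintype β] [DecidableEq β]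
    (κ : V → β) (hκ : Function.Surjective κ) :
    Fintype.card V * (Fintype.card β - 1) ≤ #{p : V × V | κ p.1 ≠ κ p.2} := by
  have hrow (u : V) : Fintype.card β - 1 ≤ #{v | κ u ≠ κ v} := by
    rw [← card_univ, ← card_erase_of_mem (mem_univ (κ u))]
    refine card_le_card_of_surjOn κ fun b hb => ?_
    obtain ⟨v, rfl⟩ := hκ b
    exact ⟨v, by simpa [eq_comm] using hb, rfl⟩
  calc Fintype.card V * (Fintype.card β - 1) = ∑ _u : V, (Fintype.card β - 1) := by simp
    _ ≤ ∑ u : V, #{v | κ u ≠ κ v} := sum_le_sum fun u _ => hrow u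
    _ = #{p : V × V | κ p.1 ≠ κ p.2} := by
      rw [card_filter, Fintype.sum_prod_type]
      simp only [card_filter]

variable [DecidableEq V] [DecidableEq C] (color : Sym2 V → C)

theorem card_filter_color_eq_le (c : C) :
    #{p : V × V | p.1 ≠ p.2 ∧ color s(p.1, p.2) = c} ≤ 2 * colorCount ⊤ color c := by
  set P : Finset (V × V) := {p : V × V | p.1 ≠ p.2 ∧ color s(p.1, p.2) = c}
  have hfiber : ∀ e ∈ P.image (fun p => s(p.1, p.2)), #{p ∈ P | s(p.1, p.2) = e} ≤ 2 := by
    simp only [mem_image]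
    rintro _ ⟨⟨a, b⟩, -, rfl⟩
    calc #{p ∈ P | s(p.1, p.2) = s(a, b)} ≤ #{(a, b), (b, a)} := by
          refine card_le_card fun p hp => ?_
          rcases Sym2.eq_iff.mp (mem_filter.mp hp).2 with ⟨h₁, h₂⟩ | ⟨h₁, h₂⟩ <;>
            simp [Prod.ext_iff, h₁, h₂]
      _ ≤ 2 := card_le_two
  calc #P ≤ 2 * #(P.image fun p => s(p.1, p.2)) := card_le_mul_card_image _ _ hfiber
    _ ≤ 2 * colorCount ⊤ color c := by
      rw [colorCount, Nat.card_eq_fintype_card, Fintype.card_subtype]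
      gcongr
      intro e he
      simp only [P, mem_image, mem_filter, mem_univ, true_and] at he
      obtain ⟨p, ⟨hp, rfl⟩, rfl⟩ := he
      simpa using hp

theorem card_le_card_add_one_of_forall_color_mem {β : Type*} [Fintype β] [DecidableEq β]
    (κ : V → β) (hκ : Function.Surjective κ) (D : Finset (Sym2 V))
    (hcount : ∀ c, 2 * colorCount ⊤ color c ≤ Fintype.card V)
    (hD : ∀ x y, κ x ≠ κ y → color s(x, y) ∈ color '' ↑D) :
    Fintype.card β ≤ #D + 1 := by
  have hupper : #{p : V × V | κ p.1 ≠ κ p.2} ≤ #D * Fintype.card V := calc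
    _ ≤ #(D.biUnion fun f => {p : V × V | p.1 ≠ p.2 ∧ color s(p.1, p.2) = color f}) := by
      refine card_le_card fun p hp => ?_
      have hp : κ p.1 ≠ κ p.2 := (mem_filter.mp hp).2
      obtain ⟨f, hf, hfc⟩ := hD p.1 p.2 hp
      exact mem_biUnion.mpr ⟨f, hf, by simpa [hfc] using fun h => hp (congrArg κ h)⟩
    _ ≤ ∑ f ∈ D, #{p : V × V | p.1 ≠ p.2 ∧ color s(p.1, p.2) = color f} :=
      card_biUnion_le
    _ ≤ ∑ _f ∈ D, Fintype.card V :=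
      sum_le_sum fun f _ => (card_filter_color_eq_le color (color f)).trans (hcount _)
    _ = #D * Fintype.card V := by simp
  have hβ : Fintype.card β ≤ Fintype.card V := Fintype.card_le_of_surjective κ hκ
  have := (mul_card_sub_one_le_card_filter_ne κ hκ).trans hupper
  rw [mul_comm] at this
  rcases Nat.eq_zero_or_pos (Fintype.card V) with h0 | hpos
  · omega
  · have := Nat.le_of_mul_le_mul_right this hpos
    omega

end Counting

section Growth

variable {V C : Type*} [DecidableEq V] {color : Sym2 V → C} {E D : Finset (Sym2 V)}

theorem color_mem_image_of_not_reachable_sdiff (hE : (edgeGraph E).IsAcyclic)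
    (hused : ∀ c, IsReachableColor color E c → c ∈ color '' ↑E)
    (hD : ∀ f, f ∈ D ↔ f ∈ E ∧ IsReachableColor color E (color f)) {x y : V}
    (h : ¬(edgeGraph (E \ D)).Reachable x y) : color s(x, y) ∈ color '' ↑D := by
  have hreach : IsReachableColor color E (color s(x, y)) := by
    by_cases hxy : (edgeGraph E).Reachable x y
    · obtain ⟨f, hf, hnr⟩ := exists_not_reachable_erase hE hxy h
      exact .replace ((hD f).mp hf).2 ⟨hxy, hnr⟩
    · exact .cross hxy
  obtain ⟨g, hg, hgc⟩ := hused _ hreach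
  exact ⟨g, (hD g).mpr ⟨hg, hgc ▸ hreach⟩, hgc⟩

variable [Fintype V]

theorem IsRainbowForest.exists_card_eq_succ (hE : IsRainbowForest color E)
    (hcount : ∀ c, 2 * colorCount ⊤ color c ≤ Fintype.card V)
    (hsize : #E + 2 ≤ Fintype.card V) :
    ∃ F, IsRainbowForest color F ∧ #F = #E + 1 := by
  classical
  by_contra hno
  have hused (c : C) (hc : IsReachableColor color E c) : c ∈ color '' ↑E := by
    by_contra hfresh
    exact hno (hE.exists_card_eq_succ_of_isReachableColor hc hfresh)
  set D := {f ∈ E | IsReachableColor color E (color f)}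
  have hDE : D ⊆ E := filter_subset _ _
  have hcomp := card_connectedComponent_add_card (E := E \ D)
    (fun e he => hE.loopless e (mem_sdiff.mp he).1)
    (hE.isAcyclic.anti (edgeGraph_mono sdiff_subset))
  have hbound := card_le_card_add_one_of_forall_color_mem color
    (edgeGraph (E \ D)).connectedComponentMk (fun c => c.exists_rep) D hcount
    fun x y hxy => color_mem_image_of_not_reachable_sdiff hE.isAcyclic hused (fun f => mem_filter)
      fun h => hxy (ConnectedComponent.eq.mpr h)
  rw [Nat.card_eq_fintype_card, card_sdiff_of_subset hDE] at hcomp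
  have := card_le_card hDE
  omega

theorem exists_isRainbowForest_card_eq
    (hcount : ∀ c, 2 * colorCount ⊤ color c ≤ Fintype.card V) :
    ∀ j, j + 1 ≤ Fintype.card V → ∃ E, IsRainbowForest color E ∧ #E = j
  | 0, _ => ⟨∅, .empty, rfl⟩
  | j + 1, hj => by
    obtain ⟨E, hE, rfl⟩ := exists_isRainbowForest_card_eq hcount j (by omega)
    exact hE.exists_card_eq_succ hcount (by omega)

theorem IsRainbowForest.isTree (hE : IsRainbowForest color E)
    (hcard : #E + 1 = Fintype.card V) :
    (edgeGraph E).IsTree := by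
  have hcomp := card_connectedComponent_add_card hE.loopless hE.isAcyclic
  obtain ⟨hsub, ⟨c⟩⟩ := Nat.card_eq_one_iff_unique.mp
    (show Nat.card (edgeGraph E).ConnectedComponent = 1 by omega)
  obtain ⟨v, -⟩ := c.exists_rep
  exact ⟨(connected_iff_exists_forall_reachable _).mpr
    ⟨v, fun w => ConnectedComponent.eq.mp (hsub.elim _ _)⟩, hE.isAcyclic⟩

end Growth

end HeterochromaticTree

open HeterochromaticTree in
theorem stmt8 {V C : Type*} [Fintype V] (color : Sym2 V → C) (n : ℕ)
    (hn : Fintype.card V = n) (h2 : 2 ≤ n)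
    (h : ∀ c, (colorCount (⊤ : SimpleGraph V) color c : ℚ) ≤ (n : ℚ) / 2) :
    ∃ F : SimpleGraph V, F ≤ (⊤ : SimpleGraph V) ∧ F.IsTree ∧
      Set.InjOn color F.edgeSet := by
  classical
  subst hn
  have hcount (c : C) : 2 * colorCount ⊤ color c ≤ Fintype.card V := by
    have := h c
    exact_mod_cast (by linarith : (2 * colorCount ⊤ color c : ℚ) ≤ Fintype.card V)
  obtain ⟨E, hE, hEcard⟩ :=
    exists_isRainbowForest_card_eq hcount (Fintype.card V - 1) (by omega)
  refine ⟨edgeGraph E, le_top, hE.isTree (by omega), hE.injOn.mono ?_⟩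
  rw [edgeGraph, edgeSet_fromEdgeSet]
  exact Set.sdiff_subset
end
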